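/- Let M(a) be the 4×4 Hermitian matrix with zero diagonal, M(a)₀₁ = M(a)₀₂ = M(a)₀₃ = 1, M(a)₁₂ = M(a)₂₃ = M(a)₃₁ = exp(ia), and Hermitian symmetry. Then the characteristic polynomial of M(a) equals (X² − 2·cos(a)·X − 3)·(X² + 2·cos(a)·X + 2·cos(2a) − 1). -/

import Mathlib

/-!
With `z = exp (i a)` the matrix lies in the family `gyroidMatrix z z⁻¹`, whose characteristic
polynomial is a polynomial identity in `s = z + z⁻¹` once `z z⁻¹ = 1` is used. Finally
`s = 2 cos a` and `s² - 3 = 2 cos (2a) - 1`.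
-/

open Complex Matrix Polynomial

/-- The Gyroid graph Hamiltonian along the diagonal of the 3-torus. -/
noncomputable def gyroidDiag (a : ℝ) : Matrix (Fin 4) (Fin 4) ℂ :=
  !![0, 1, 1, 1;
     1, 0, Complex.exp (Complex.I * a), Complex.exp (-(Complex.I * a));
     1, Complex.exp (-(Complex.I * a)), 0, Complex.exp (Complex.I * a);
     1, Complex.exp (Complex.I * a), Complex.exp (-(Complex.I * a)), 0]

theorem Matrix.det_fin_four {R : Type*} [CommRing R] (A : Matrix (Fin 4) (Fin 4) R) :
    A.det =
      A 0 0 * (A 1 1 * (A 2 2 * A 3 3 - A 2 3 * A 3 2) - A 1 2 * (A 2 1 * A 3 3 - A 2 3 * A 3 1)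
          + A 1 3 * (A 2 1 * A 3 2 - A 2 2 * A 3 1))
      - A 0 1 * (A 1 0 * (A 2 2 * A 3 3 - A 2 3 * A 3 2) - A 1 2 * (A 2 0 * A 3 3 - A 2 3 * A 3 0)
          + A 1 3 * (A 2 0 * A 3 2 - A 2 2 * A 3 0))
      + A 0 2 * (A 1 0 * (A 2 1 * A 3 3 - A 2 3 * A 3 1) - A 1 1 * (A 2 0 * A 3 3 - A 2 3 * A 3 0)
          + A 1 3 * (A 2 0 * A 3 1 - A 2 1 * A 3 0))
      - A 0 3 * (A 1 0 * (A 2 1 * A 3 2 - A 2 2 * A 3 1) - A 1 1 * (A 2 0 * A 3 2 - A 2 2 * A 3 0)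
          + A 1 2 * (A 2 0 * A 3 1 - A 2 1 * A 3 0)) := by
  simp [det_succ_row_zero, Fin.sum_univ_succ, Fin.succAbove]
  ring

section GyroidMatrix

variable {R : Type*} [CommRing R]

def gyroidMatrix (z w : R) : Matrix (Fin 4) (Fin 4) R :=
  !![0, 1, 1, 1; 1, 0, z, w; 1, w, 0, z; 1, z, w, 0]

theorem charpoly_gyroidMatrix {z w : R} (hzw : z * w = 1) :
    (gyroidMatrix z w).charpoly =
      (X ^ 2 - C (z + w) * X - 3) * (X ^ 2 + C (z + w) * X + C ((z + w) ^ 2 - 3)) := by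
  rw [charpoly, det_fin_four]
  simp only [gyroidMatrix, Fin.isValue, charmatrix_apply_eq, of_apply, cons_val', cons_val_zero,
    cons_val_fin_one, map_zero, sub_zero, cons_val_one, cons_val, ne_eq, Fin.reduceEq,
    not_false_eq_true, charmatrix_apply_ne, mul_neg, neg_mul, neg_neg, sub_neg_eq_add, X_mul_C,
    zero_ne_one, map_one, one_ne_zero, one_mul, neg_sub, mul_one, neg_add_rev, map_add, map_sub,
    map_pow, C_ofNat]
  have hC : C z * C w = (1 : R[X]) := by rw [← C_mul, hzw, C_1]
  linear_combination 3 * (X * C z + X * C w - X ^ 2 + 3) * hC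

end GyroidMatrix

theorem gyroidDiag_eq_gyroidMatrix (a : ℝ) :
    gyroidDiag a = gyroidMatrix (exp (I * a)) (exp (-(I * a))) := rfl

theorem stmt1 (a : ℝ) :
    (gyroidDiag a).charpoly =
      (X ^ 2 - C ((2 * Real.cos a : ℝ) : ℂ) * X - 3) *
      (X ^ 2 + C ((2 * Real.cos a : ℝ) : ℂ) * X + C ((2 * Real.cos (2 * a) - 1 : ℝ) : ℂ)) := by
  have hsum : ((2 * Real.cos a : ℝ) : ℂ) = exp (I * a) + exp (-(I * a)) := by
    push_cast
    rw [two_cos, neg_mul, mul_comm (a : ℂ) I]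
  have hcos_two_mul : ((2 * Real.cos (2 * a) - 1 : ℝ) : ℂ) = ((2 * Real.cos a : ℝ) : ℂ) ^ 2 - 3 := by
    rw [Real.cos_two_mul]
    push_cast
    ring
  have hinv : exp (I * a) * exp (-(I * a)) = 1 := by rw [← exp_add, add_neg_cancel, exp_zero]
  rw [gyroidDiag_eq_gyroidMatrix, charpoly_gyroidMatrix hinv, hcos_two_mul, hsum]
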